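/- arXiv:2403.06756 — 2 statements merged into one kernel-verified Lean document; each statement's English description precedes it below -/
import Mathlib

section
/- Let m ≥ 1 be an integer and let C ∈ ℝ^{2m×2m} be symmetric positive definite with T1ᵀ C T1 = C. Then for every τ ∈ {−1,1}^{2m}, d(T1τ) = T1 · d(τ), where d is defined with respect to Σ = C. -/
open MeasureTheory Real Matrix

/-- Multivariate Gaussian density `φ(x; μ, S)` on `ι → ℝ`. -/
noncomputable def gaussDensity {ι : Type*} [Fintype ι] [DecidableEq ι] (μ : ι → ℝ) (S : Matrix ι ι ℝ)
    (x : ι → ℝ) : ℝ :=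
  (2 * π) ^ (-(Fintype.card ι : ℝ) / 2) * S.det ^ (-(1 : ℝ) / 2) *
    Real.exp (-(1 / 2) * ((x - μ) ⬝ᵥ (S⁻¹ *ᵥ (x - μ))))

/-- Orthant probability `P(μ, S) = ∫_{(0,∞)^k} φ(x; μ, S) dx`. -/
noncomputable def orthantProb {ι : Type*} [Fintype ι] [DecidableEq ι] (μ : ι → ℝ) (S : Matrix ι ι ℝ) : ℝ :=
  ∫ x in {x : ι → ℝ | ∀ i, 0 < x i}, gaussDensity μ S x

/-- Schur complement `R(S, l) = Θ(S, l) − (1/S l l) r_l r_lᵀ`, indexed by `{i // i ≠ l}`. -/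
noncomputable def schurR {ι : Type*} (S : Matrix ι ι ℝ) (l : ι) :
    Matrix {i : ι // i ≠ l} {i : ι // i ≠ l} ℝ :=
  fun i j => S i.1 j.1 - S i.1 l * S j.1 l / S l l

/-- The vector `d(τ)` with `d(τ)(l) = τ(l) (2π S l l)^{-1/2} P(0, R(Γ_τ S Γ_τ, l))`. -/
noncomputable def dvec {ι : Type*} [Fintype ι] [DecidableEq ι] (S : Matrix ι ι ℝ)
    (τ : ι → ℝ) : ι → ℝ :=
  fun l => τ l * (2 * π * S l l) ^ (-(1 : ℝ) / 2) *
    orthantProb (0 : {i : ι // i ≠ l} → ℝ)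
      (schurR (Matrix.diagonal τ * S * Matrix.diagonal τ) l)

/-- The block matrix `T1 = [[0, I_m], [−I_m, 0]]` on `Fin m ⊕ Fin m`. -/
noncomputable def T1 (m : ℕ) : Matrix (Fin m ⊕ Fin m) (Fin m ⊕ Fin m) ℝ :=
  Matrix.fromBlocks 0 1 (-1) 0

/-!
`T1` is a signed permutation matrix: `T1 v = (i ↦ s i * v (p i))`, where `p` swaps the two blocks
and `s = (1, …, 1, -1, …, -1)`. The hypothesis `T1ᵀ C T1 = C` says that conjugating `C` by
`diag s` permutes its entries along `p`, so `Γ_{T1 τ} C Γ_{T1 τ}` is `Γ_τ C Γ_τ` reindexed along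
`p`. Schur complements commute with reindexing, and so do orthant probabilities of Gaussians,
since a permutation of coordinates preserves Lebesgue measure and the positive orthant. Hence
`d(T1 τ)(l) = s l * d(τ)(p l)`.
-/

lemma schurR_submatrix_equiv {ι κ : Type*} (e : κ ≃ ι) (S : Matrix ι ι ℝ) (l : κ) :
    schurR (S.submatrix e e) l =
      (schurR S (e l)).submatrix (e.subtypeEquiv (p := (· ≠ l)) fun _ => e.injective.ne_iff.symm)
        (e.subtypeEquiv (p := (· ≠ l)) fun _ => e.injective.ne_iff.symm) :=
  rfl

section Reindex

variable {ι κ : Type*} [Fintype ι] [DecidableEq ι] [Fintype κ] [DecidableEq κ]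

lemma gaussDensity_submatrix_equiv (e : κ ≃ ι) (μ : κ → ℝ) (S : Matrix ι ι ℝ) (x : κ → ℝ) :
    gaussDensity μ (S.submatrix e e) x = gaussDensity (μ ∘ e.symm) S (x ∘ e.symm) := by
  simp only [gaussDensity, Fintype.card_congr e, det_submatrix_equiv_self, inv_submatrix_equiv,
    submatrix_mulVec_equiv, ← comp_equiv_symm_dotProduct]
  rfl

lemma orthantProb_submatrix_equiv (e : κ ≃ ι) (μ : κ → ℝ) (S : Matrix ι ι ℝ) :
    orthantProb μ (S.submatrix e e) = orthantProb (μ ∘ e.symm) S := by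
  let F := MeasurableEquiv.piCongrLeft (fun _ : ι => ℝ) e
  have hF : ∀ x, F x = x ∘ e.symm := fun x => funext fun i => by
    simpa using MeasurableEquiv.piCongrLeft_apply_apply (β := fun _ => ℝ) e x (e.symm i)
  have hpre : F ⁻¹' {y | ∀ i, 0 < y i} = {x | ∀ j, 0 < x j} := by
    ext x
    simp only [Set.mem_preimage, Set.mem_ofPred_eq, hF, Function.comp_apply]
    exact (e.forall_congr_left (p := fun j => 0 < x j)).symm
  rw [orthantProb, orthantProb, ← (volume_measurePreserving_piCongrLeft _ e).setIntegral_preimage_emb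
    F.measurableEmbedding, hpre]
  simp only [gaussDensity_submatrix_equiv, ← hF]
  rfl

lemma orthantProb_schurR_submatrix_equiv (e : κ ≃ ι) (S : Matrix ι ι ℝ) (l : κ) :
    orthantProb 0 (schurR (S.submatrix e e) l) = orthantProb 0 (schurR S (e l)) := by
  rw [schurR_submatrix_equiv, orthantProb_submatrix_equiv]
  rfl

end Reindex

section SignedPerm

variable {ι : Type*} [Fintype ι] [DecidableEq ι]

def signedPermMatrix (p : Equiv.Perm ι) (s : ι → ℝ) : Matrix ι ι ℝ :=
  diagonal s * p.toPEquiv.toMatrix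

lemma signedPermMatrix_mulVec (p : Equiv.Perm ι) (s v : ι → ℝ) :
    signedPermMatrix p s *ᵥ v = fun i => s i * v (p i) := by
  ext i
  rw [signedPermMatrix, ← mulVec_mulVec, PEquiv.toMatrix_toPEquiv_mulVec, mulVec_diagonal]
  rfl

lemma transpose_signedPermMatrix_mul_mul (p : Equiv.Perm ι) (s : ι → ℝ) (C : Matrix ι ι ℝ) :
    (signedPermMatrix p s)ᵀ * C * signedPermMatrix p s =
      (diagonal s * C * diagonal s).submatrix p.symm p.symm := by
  calc _ = p.symm.toPEquiv.toMatrix * (diagonal s * C * diagonal s) * p.toPEquiv.toMatrix := by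
        simp only [signedPermMatrix, transpose_mul, diagonal_transpose, ← PEquiv.toMatrix_symm,
          ← Equiv.toPEquiv_symm, Matrix.mul_assoc]
    _ = _ := by
        rw [PEquiv.toMatrix_toPEquiv_mul, PEquiv.mul_toMatrix_toPEquiv, submatrix_submatrix]
        rfl

theorem dvec_signedPermMatrix_mulVec (p : Equiv.Perm ι) (s : ι → ℝ) (hs : ∀ i, s i * s i = 1)
    (C : Matrix ι ι ℝ) (hC : (signedPermMatrix p s)ᵀ * C * signedPermMatrix p s = C)
    (τ : ι → ℝ) :
    dvec C (signedPermMatrix p s *ᵥ τ) = signedPermMatrix p s *ᵥ dvec C τ := by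
  have hsym : diagonal s * C * diagonal s = C.submatrix p p := by
    conv_rhs => rw [← hC, transpose_signedPermMatrix_mul_mul, submatrix_submatrix]
    simp
  have hconj : diagonal (signedPermMatrix p s *ᵥ τ) * C * diagonal (signedPermMatrix p s *ᵥ τ) =
      (diagonal τ * C * diagonal τ).submatrix p p := by
    ext a b
    have hab := congr_fun₂ hsym a b
    simp only [signedPermMatrix_mulVec, diagonal_mul, mul_diagonal, submatrix_apply] at hab ⊢
    linear_combination τ (p a) * τ (p b) * hab
  have hdiag : ∀ l, C (p l) (p l) = C l l := fun l => by
    have hll := congr_fun₂ hsym l l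
    simp only [diagonal_mul, mul_diagonal, submatrix_apply] at hll
    linear_combination -hll + C l l * hs l
  funext l
  simp only [dvec, hconj, orthantProb_schurR_submatrix_equiv]
  simp only [signedPermMatrix_mulVec, dvec, hdiag]
  ring

end SignedPerm

lemma T1_eq_signedPermMatrix (m : ℕ) :
    T1 m = signedPermMatrix (Equiv.sumComm (Fin m) (Fin m)) (Sum.elim 1 (-1)) := by
  ext (i | i) (j | j) <;> simp [T1, signedPermMatrix, one_apply, eq_comm, apply_ite]

theorem stmt6_general {m : ℕ} (C : Matrix (Fin m ⊕ Fin m) (Fin m ⊕ Fin m) ℝ)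
    (hT : (T1 m)ᵀ * C * T1 m = C)
    (τ : Fin m ⊕ Fin m → ℝ) :
    dvec C (T1 m *ᵥ τ) = T1 m *ᵥ dvec C τ := by
  rw [T1_eq_signedPermMatrix] at hT ⊢
  exact dvec_signedPermMatrix_mulVec _ _ (by rintro (i | i) <;> simp) C hT τ

/-- if `C` is symmetric positive definite with `T1ᵀ C T1 = C`, then for every
sign vector `τ`, `d(T1 τ) = T1 · d(τ)`, where `d` is defined with respect to `Σ = C`. -/
theorem stmt6 {m : ℕ} (hm : 1 ≤ m) (C : Matrix (Fin m ⊕ Fin m) (Fin m ⊕ Fin m) ℝ)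
    (hC : C.PosDef) (hT : (T1 m)ᵀ * C * T1 m = C)
    (τ : Fin m ⊕ Fin m → ℝ) (hτ : ∀ i, τ i = 1 ∨ τ i = -1) :
    dvec C (T1 m *ᵥ τ) = T1 m *ᵥ dvec C τ :=
  stmt6_general C hT τ
end

section
/- Let J be a finite set, σ : J → J a bijection, O : J → (0,∞) with O(σ(j)) = O(j) for all j, and O' : J → ℝ with O'(σ(j)) = O'(j) for all j. Let T ∈ ℝ^{n×n} with Tᵀ T = I_n and T² = −I_n, let d : J → ℝⁿ satisfy d(σ(j)) = T · d(j) for all j, let a ∈ ℝⁿ and set b = −T a. Then ∑_{j∈J} O'(j) (aᵀ d(j))(bᵀ d(j)) / O(j)² = 0 and ∑_{j∈J} O'(j) (aᵀ d(j))² / O(j)² = ∑_{j∈J} O'(j) (bᵀ d(j))² / O(j)². (These identities give the covariance matrix (υ₁²/υ²) I₂ of the normalized score vector under a mismatched noise covariance matrix.) -/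
/-!
Put `x j = aᵀ d j` and `y j = bᵀ d j`. Since `T` is orthogonal with `T² = -1` it is skew,
so `d (σ j) = T d j` gives `x (σ j) = y j` and `y (σ j) = -x j`. Reindexing the sums along
`σ`, whose weights `O' / O²` are `σ`-invariant, turns `∑ x y` into its negative and `∑ x²` into
`∑ y²`.
-/

open Matrix

theorem Fintype.sum_eq_zero_of_apply_equiv_eq_neg {J M : Type*} [Fintype J] [AddCommGroup M]
    [IsAddTorsionFree M] (σ : J ≃ J) (f : J → M) (hf : ∀ j, f (σ j) = -f j) :
    ∑ j, f j = 0 := by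
  have h : ∑ j, f j = -∑ j, f j := by
    rw [← Finset.sum_neg_distrib]
    exact Fintype.sum_equiv σ _ _ fun j => by rw [hf, neg_neg]
  exact self_eq_neg.mp h

namespace Matrix

variable {R n : Type*} [Fintype n] {T : Matrix n n R}

theorem transpose_eq_neg_of_mul_self_eq_neg_one [DecidableEq n] [Ring R] (hT1 : Tᵀ * T = 1)
    (hT2 : T * T = -1) : Tᵀ = -T := by
  calc Tᵀ = -(Tᵀ * (T * T)) := by rw [hT2, mul_neg_one, neg_neg]
    _ = -T := by rw [← Matrix.mul_assoc, hT1, Matrix.one_mul]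

variable [CommRing R]

theorem dotProduct_mulVec_of_transpose_eq_neg (hT : Tᵀ = -T) (a v : n → R) :
    a ⬝ᵥ (T *ᵥ v) = -(T *ᵥ a) ⬝ᵥ v := by
  rw [dotProduct_mulVec, ← mulVec_transpose, hT, neg_mulVec]

theorem neg_mulVec_dotProduct_mulVec_of_transpose_eq_neg [DecidableEq n] (hT : Tᵀ = -T)
    (hT2 : T * T = -1) (a v : n → R) : -(T *ᵥ a) ⬝ᵥ (T *ᵥ v) = -(a ⬝ᵥ v) := by
  rw [dotProduct_mulVec_of_transpose_eq_neg hT, mulVec_neg, neg_neg, mulVec_mulVec, hT2,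
    neg_mulVec, one_mulVec, neg_dotProduct]

end Matrix

theorem stmt9_general {J : Type*} [Fintype J] (σ : J ≃ J) (O : J → ℝ)
    (hOσ : ∀ j, O (σ j) = O j) (O' : J → ℝ) (hO'σ : ∀ j, O' (σ j) = O' j)
    {n : ℕ} (T : Matrix (Fin n) (Fin n) ℝ)
    (hT1 : Tᵀ * T = 1) (hT2 : T * T = -1)
    (d : J → Fin n → ℝ) (hd : ∀ j, d (σ j) = T *ᵥ d j)
    (a b : Fin n → ℝ) (hb : b = -(T *ᵥ a)) :
    (∑ j, O' j * ((a ⬝ᵥ d j) * (b ⬝ᵥ d j)) / (O j) ^ 2) = 0 ∧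
    (∑ j, O' j * (a ⬝ᵥ d j) ^ 2 / (O j) ^ 2) = ∑ j, O' j * (b ⬝ᵥ d j) ^ 2 / (O j) ^ 2 := by
  have hT : Tᵀ = -T := transpose_eq_neg_of_mul_self_eq_neg_one hT1 hT2
  have hx : ∀ j, a ⬝ᵥ d (σ j) = b ⬝ᵥ d j := fun j => by
    rw [hd, hb, dotProduct_mulVec_of_transpose_eq_neg hT]
  have hy : ∀ j, b ⬝ᵥ d (σ j) = -(a ⬝ᵥ d j) := fun j => by
    rw [hd, hb, neg_mulVec_dotProduct_mulVec_of_transpose_eq_neg hT hT2]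
  constructor
  · exact Fintype.sum_eq_zero_of_apply_equiv_eq_neg σ _ fun j => by
      rw [hO'σ, hOσ, hx, hy]
      ring
  · exact (Fintype.sum_equiv σ _ _ fun j => by rw [hO'σ, hOσ, hx]).symm

/-- as in Statement 8, additionally with weights `O' : J → ℝ` invariant under
`σ`: `∑_j O'_j (aᵀ d_j)(bᵀ d_j)/O_j² = 0` and
`∑_j O'_j (aᵀ d_j)²/O_j² = ∑_j O'_j (bᵀ d_j)²/O_j²`. -/
theorem stmt9 {J : Type*} [Fintype J] (σ : J ≃ J) (O : J → ℝ) (hO : ∀ j, 0 < O j)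
    (hOσ : ∀ j, O (σ j) = O j) (O' : J → ℝ) (hO'σ : ∀ j, O' (σ j) = O' j)
    {n : ℕ} (T : Matrix (Fin n) (Fin n) ℝ)
    (hT1 : Tᵀ * T = 1) (hT2 : T * T = -1)
    (d : J → Fin n → ℝ) (hd : ∀ j, d (σ j) = T *ᵥ d j)
    (a b : Fin n → ℝ) (hb : b = -(T *ᵥ a)) :
    (∑ j, O' j * ((a ⬝ᵥ d j) * (b ⬝ᵥ d j)) / (O j) ^ 2) = 0 ∧
    (∑ j, O' j * (a ⬝ᵥ d j) ^ 2 / (O j) ^ 2) = ∑ j, O' j * (b ⬝ᵥ d j) ^ 2 / (O j) ^ 2 :=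
  stmt9_general σ O hOσ O' hO'σ T hT1 hT2 d hd a b hb
end
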